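/- In H(n,k,p_n) with k ≥ 2 fixed and expected degree λ_n := C(n−1,k−1)·p_n = log n + c for a fixed real c, for every fixed r ≥ 1 the expected number of star-collisions of support size r tends to 0 as n → ∞; in particular P(X_r ≥ 1) → 0. -/

import Mathlib

/-- All `k`-element subsets of `[n]`, the possible hyperedges of a `k`-uniform
hypergraph on `n` vertices. -/
def kSets (n k : ℕ) : Finset (Finset (Fin n)) :=
  (Finset.univ : Finset (Fin n)).powersetCard k

/-- The probability, in the random hypergraph `H(n,k,p)` where each `k`-subset is a
hyperedge independently with probability `p`, of a given edge set `E`. -/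
noncomputable def hweight (n k : ℕ) (p : ℝ) (E : Finset (Finset (Fin n))) : ℝ :=
  if E ⊆ kSets n k then p ^ E.card * (1 - p) ^ ((kSets n k).card - E.card) else 0

open Classical in
/-- The probability of an event `A` under `H(n,k,p)`. -/
noncomputable def hprob (n k : ℕ) (p : ℝ) (A : Finset (Finset (Fin n)) → Prop) : ℝ :=
  ∑ E : Finset (Finset (Fin n)), if A E then hweight n k p E else 0

/-- The expectation of a random variable `f` under `H(n,k,p)`. -/
noncomputable def hexp (n k : ℕ) (p : ℝ) (f : Finset (Finset (Fin n)) → ℝ) : ℝ :=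
  ∑ E : Finset (Finset (Fin n)), hweight n k p E * f E

/-- The star of a vertex `v`: the set of hyperedges of `E` containing `v`. -/
def hstar {n : ℕ} (E : Finset (Finset (Fin n))) (v : Fin n) : Finset (Finset (Fin n)) :=
  E.filter (fun e => v ∈ e)

/-- `X_r`: the number of unordered pairs of (distinct) vertices with identical stars of
size exactly `r` (star-collisions of support size `r`). -/
def Xr (n r : ℕ) (E : Finset (Finset (Fin n))) : ℕ :=
  ((Finset.univ : Finset (Fin n)).powersetCard 2 |>.filter
    (fun P => (∀ u ∈ P, ∀ v ∈ P, hstar E u = hstar E v) ∧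
      ∀ u ∈ P, (hstar E u).card = r)).card

open Filter

/-!
Two distinct vertices `u, v` have equal stars of size `r` exactly when no edge meets just one of
them and exactly `r` edges contain both. Only the edges meeting `{u, v}` matter, so this has
probability `C(b, r) p^r (1 - p)^(t - r)`, where `b = C(n-2, k-2)` edges contain both vertices and
`t = 2 C(n-1, k-1) - b` edges meet `{u, v}`; this is at most `(b p)^r e^{2 b p} e^{-2 λ}`.
Summing over fewer than `n²` pairs, `n² e^{-2 λ} = e^{-2 c}` and `b p = (k - 1) λ / (n - 1) → 0`
give `E X_r → 0`, and Markov's inequality gives `P(X_r ≥ 1) → 0`.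
-/

open Finset

section BernoulliSubset

variable {α : Type*}

noncomputable def bernoulliWeight (s : Finset α) (p : ℝ) (E : Finset α) : ℝ :=
  p ^ #E * (1 - p) ^ (#s - #E)

lemma sum_bernoulliWeight (s : Finset α) (p : ℝ) :
    ∑ E ∈ s.powerset, bernoulliWeight s p E = 1 := by
  simp [bernoulliWeight, sum_pow_mul_eq_add_pow]

lemma bernoulliWeight_union [DecidableEq α] {s t A B : Finset α} (hst : Disjoint s t)
    (hA : A ⊆ s) (hB : B ⊆ t) (p : ℝ) :
    bernoulliWeight (s ∪ t) p (A ∪ B) = bernoulliWeight s p A * bernoulliWeight t p B := by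
  have hAB : Disjoint A B := hst.mono hA hB
  have hAs := card_le_card hA
  have hBt := card_le_card hB
  rw [bernoulliWeight, bernoulliWeight, bernoulliWeight, card_union_of_disjoint hst,
    card_union_of_disjoint hAB, show #s + #t - (#A + #B) = (#s - #A) + (#t - #B) by omega]
  ring

lemma sum_bernoulliWeight_mul_filter [DecidableEq α] (s : Finset α) (P : α → Prop)
    [DecidablePred P] (p : ℝ) (f : Finset α → ℝ) :
    ∑ E ∈ s.powerset, bernoulliWeight s p E * f (E.filter P)
      = ∑ F ∈ (s.filter P).powerset, bernoulliWeight (s.filter P) p F * f F := by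
  have hdisj := disjoint_filter_filter_not s s P
  calc ∑ E ∈ s.powerset, bernoulliWeight s p E * f (E.filter P)
      = ∑ FG ∈ (s.filter P).powerset ×ˢ (s.filter (¬P ·)).powerset,
          bernoulliWeight (s.filter P) p FG.1 * f FG.1 *
            bernoulliWeight (s.filter (¬P ·)) p FG.2 := by
        refine sum_nbij' (fun E => (E.filter P, E.filter (¬P ·))) (fun FG => FG.1 ∪ FG.2)
          ?_ ?_ ?_ ?_ ?_
        · intro E hE
          simp only [mem_powerset, mem_product] at hE ⊢
          exact ⟨filter_subset_filter P hE, filter_subset_filter _ hE⟩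
        · intro FG hFG
          simp only [mem_powerset, mem_product] at hFG ⊢
          exact union_subset (hFG.1.trans (filter_subset _ _)) (hFG.2.trans (filter_subset _ _))
        · intro E _
          exact filter_union_filter_not_eq P E
        · rintro ⟨F, G⟩ hFG
          simp only [mem_product, mem_powerset, subset_iff, mem_filter] at hFG
          have hF : ∀ x ∈ F, P x := fun x hx => (hFG.1 hx).2
          have hG : ∀ x ∈ G, ¬P x := fun x hx => (hFG.2 hx).2
          rw [filter_union, filter_union, filter_true_of_mem hF, filter_false_of_mem hG,
            filter_false_of_mem (fun x hx => not_not.2 (hF x hx)), filter_true_of_mem hG,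
            union_empty, empty_union]
        · intro E hE
          rw [mem_powerset] at hE
          have := bernoulliWeight_union hdisj (filter_subset_filter P hE)
            (filter_subset_filter (¬P ·) hE) p
          rw [filter_union_filter_not_eq, filter_union_filter_not_eq] at this
          rw [this]
          ring
    _ = ∑ F ∈ (s.filter P).powerset, bernoulliWeight (s.filter P) p F * f F := by
        rw [sum_product]
        simp_rw [← mul_sum, sum_bernoulliWeight, mul_one]

end BernoulliSubset

section RandomHypergraph

variable {n k : ℕ} {p : ℝ}

lemma hweight_nonneg (hp0 : 0 ≤ p) (hp1 : p ≤ 1) (E : Finset (Finset (Fin n))) :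
    0 ≤ hweight n k p E := by
  have : 0 ≤ 1 - p := by linarith
  unfold hweight
  split_ifs <;> positivity

lemma hexp_nonneg (hp0 : 0 ≤ p) (hp1 : p ≤ 1) {f : Finset (Finset (Fin n)) → ℝ}
    (hf : ∀ E, 0 ≤ f E) : 0 ≤ hexp n k p f :=
  sum_nonneg fun E _ => mul_nonneg (hweight_nonneg hp0 hp1 E) (hf E)

lemma hexp_mono (hp0 : 0 ≤ p) (hp1 : p ≤ 1) {f g : Finset (Finset (Fin n)) → ℝ}
    (hfg : ∀ E, f E ≤ g E) : hexp n k p f ≤ hexp n k p g :=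
  sum_le_sum fun E _ => mul_le_mul_of_nonneg_left (hfg E) (hweight_nonneg hp0 hp1 E)

lemma hexp_sum {ι : Type*} (I : Finset ι) (f : ι → Finset (Finset (Fin n)) → ℝ) :
    hexp n k p (fun E => ∑ i ∈ I, f i E) = ∑ i ∈ I, hexp n k p (f i) := by
  simp only [hexp, mul_sum]
  exact sum_comm

lemma hprob_eq_hexp (A : Finset (Finset (Fin n)) → Prop) [DecidablePred A] :
    hprob n k p A = hexp n k p (fun E => if A E then 1 else 0) := by
  unfold hprob hexp
  refine sum_congr rfl fun E _ => ?_
  by_cases h : A E <;> simp [h]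

lemma hprob_nonneg (hp0 : 0 ≤ p) (hp1 : p ≤ 1) (A : Finset (Finset (Fin n)) → Prop) :
    0 ≤ hprob n k p A := by
  classical
  rw [hprob_eq_hexp]
  exact hexp_nonneg hp0 hp1 fun E => by split_ifs <;> norm_num

lemma hprob_mono (hp0 : 0 ≤ p) (hp1 : p ≤ 1) {A B : Finset (Finset (Fin n)) → Prop}
    (hAB : ∀ E, A E → B E) : hprob n k p A ≤ hprob n k p B := by
  classical
  rw [hprob_eq_hexp, hprob_eq_hexp]
  refine hexp_mono hp0 hp1 fun E => ?_
  by_cases hA : A E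
  · simp [hA, hAB E hA]
  · simp only [hA, if_false]
    split_ifs <;> norm_num

lemma hprob_one_le_le_hexp (hp0 : 0 ≤ p) (hp1 : p ≤ 1) (X : Finset (Finset (Fin n)) → ℕ) :
    hprob n k p (fun E => 1 ≤ X E) ≤ hexp n k p (fun E => (X E : ℝ)) := by
  classical
  rw [hprob_eq_hexp]
  refine hexp_mono hp0 hp1 fun E => ?_
  split_ifs with h
  · exact_mod_cast h
  · positivity

lemma hexp_eq_sum_powerset (f : Finset (Finset (Fin n)) → ℝ) :
    hexp n k p f = ∑ E ∈ (kSets n k).powerset, bernoulliWeight (kSets n k) p E * f E := by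
  simp only [hexp, hweight, ite_mul, zero_mul, sum_ite, sum_const_zero, add_zero]
  congr 1
  ext E
  simp

end RandomHypergraph

section Stars

variable {n k : ℕ} {p : ℝ}

lemma hstar_filter {Q : Finset (Fin n) → Prop} [DecidablePred Q] {u : Fin n}
    (hQ : ∀ e, u ∈ e → Q e) (E : Finset (Finset (Fin n))) :
    hstar (E.filter Q) u = hstar E u := by
  rw [hstar, hstar, filter_filter]
  exact filter_congr fun e _ => ⟨And.right, fun hu => ⟨hQ e hu, hu⟩⟩

lemma hstar_eq_and_card_eq_iff {F : Finset (Finset (Fin n))} {u v : Fin n}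
    (hF : ∀ e ∈ F, u ∈ e ∨ v ∈ e) (r : ℕ) :
    hstar F u = hstar F v ∧ #(hstar F u) = r ↔ (∀ e ∈ F, u ∈ e ∧ v ∈ e) ∧ #F = r := by
  have hstar_eq : hstar F u = hstar F v ↔ ∀ e ∈ F, u ∈ e ∧ v ∈ e := by
    rw [hstar, hstar, filter_inj']
    exact forall₂_congr fun e he => by have := hF e he; tauto
  rw [hstar_eq]
  refine and_congr_right fun hboth => ?_
  rw [hstar, filter_true_of_mem fun e he => (hboth e he).1]

lemma hprob_hstar_eq_and_card_eq (u v : Fin n) (r : ℕ) :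
    hprob n k p (fun E => hstar E u = hstar E v ∧ #(hstar E u) = r)
      = (#{e ∈ kSets n k | u ∈ e ∧ v ∈ e}).choose r * p ^ r *
          (1 - p) ^ (#{e ∈ kSets n k | u ∈ e ∨ v ∈ e} - r) := by
  classical
  rw [hprob_eq_hexp, hexp_eq_sum_powerset]
  set s := kSets n k
  set B := {e ∈ s | u ∈ e ∧ v ∈ e}
  have hBT : B.powersetCard r ⊆ {e ∈ s | u ∈ e ∨ v ∈ e}.powerset := fun F hF => by
    rw [mem_powersetCard] at hF
    exact mem_powerset.2 (hF.1.trans (monotone_filter_right s fun _ _ h => Or.inl h.1))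
  have hevent : ∀ E ∈ s.powerset,
      bernoulliWeight s p E * (if hstar E u = hstar E v ∧ #(hstar E u) = r then 1 else 0)
        = bernoulliWeight s p E *
            if {e ∈ E | u ∈ e ∨ v ∈ e} ∈ B.powersetCard r then 1 else 0 := by
    intro E hE
    rw [mem_powerset] at hE
    congr 2
    rw [← hstar_filter (Q := fun e => u ∈ e ∨ v ∈ e) (fun e h => Or.inl h) E,
      ← hstar_filter (Q := fun e => u ∈ e ∨ v ∈ e) (fun e h => Or.inr h) E,
      hstar_eq_and_card_eq_iff (fun e he => (mem_filter.1 he).2), mem_powersetCard]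
    simp only [B, subset_iff, mem_filter]
    congr 1
    exact propext <| forall_congr' fun e =>
      imp_congr_right fun he => (and_iff_right (hE he.1)).symm
  rw [sum_congr rfl hevent, sum_bernoulliWeight_mul_filter s (fun e => u ∈ e ∨ v ∈ e) p
    (fun F => if F ∈ B.powersetCard r then 1 else 0)]
  simp only [mul_ite, mul_one, mul_zero, sum_ite_mem, inter_eq_right.2 hBT]
  rw [sum_congr rfl fun F hF => by rw [bernoulliWeight, (mem_powersetCard.1 hF).2], sum_const,
    card_powersetCard, nsmul_eq_mul]
  ring

end Stars

section Degrees

variable {n k : ℕ}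

lemma card_filter_subset_kSets (S : Finset (Fin n)) (hS : #S ≤ k) :
    #{e ∈ kSets n k | S ⊆ e} = (n - #S).choose (k - #S) := by
  rw [kSets, card_filter_powersetCard_subset S univ k (subset_univ S) hS, card_univ,
    Fintype.card_fin]

lemma card_filter_mem_kSets (hk : 1 ≤ k) (u : Fin n) :
    #{e ∈ kSets n k | u ∈ e} = (n - 1).choose (k - 1) := by
  simpa using card_filter_subset_kSets {u} (by simpa using hk)

lemma card_filter_mem_and_mem_kSets (hk : 2 ≤ k) {u v : Fin n} (huv : u ≠ v) :
    #{e ∈ kSets n k | u ∈ e ∧ v ∈ e} = (n - 2).choose (k - 2) := by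
  have hcard : #({u, v} : Finset (Fin n)) = 2 := card_pair huv
  simpa [hcard, insert_subset_iff] using card_filter_subset_kSets {u, v} (hcard ▸ hk)

lemma card_filter_mem_or_mem_add_card_filter_mem_and_mem (hk : 1 ≤ k) (u v : Fin n) :
    #{e ∈ kSets n k | u ∈ e ∨ v ∈ e} + #{e ∈ kSets n k | u ∈ e ∧ v ∈ e}
      = 2 * (n - 1).choose (k - 1) := by
  rw [filter_or, filter_and, card_union_add_card_inter, card_filter_mem_kSets hk,
    card_filter_mem_kSets hk, two_mul]

end Degrees

lemma choose_mul_pow_mul_one_sub_pow_le {p : ℝ} (hp0 : 0 ≤ p) (hp1 : p ≤ 1) {b t : ℕ}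
    (hbt : b ≤ t) (r : ℕ) :
    (b.choose r : ℝ) * p ^ r * (1 - p) ^ (t - r) ≤ (b * p) ^ r * Real.exp (-(p * (t - b))) := by
  rcases lt_or_ge b r with hbr | hrb
  · rw [Nat.choose_eq_zero_of_lt hbr, Nat.cast_zero, zero_mul, zero_mul]
    positivity
  have h1p : 0 ≤ 1 - p := by linarith
  have hchoose : (b.choose r : ℝ) * p ^ r ≤ (b * p) ^ r := by
    rw [mul_pow]
    gcongr
    exact_mod_cast Nat.choose_le_pow b r
  have hexp : (1 - p) ^ (t - r) ≤ Real.exp (-(p * (t - b))) :=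
    calc (1 - p) ^ (t - r) ≤ (1 - p) ^ (t - b) := pow_le_pow_of_le_one h1p (by linarith) (by omega)
      _ ≤ Real.exp (-p) ^ (t - b) := by gcongr; exact Real.one_sub_le_exp_neg p
      _ = Real.exp (-(p * (t - b))) := by
        rw [← Real.exp_nat_mul, Nat.cast_sub hbt]
        ring_nf
  exact mul_le_mul hchoose hexp (by positivity) (by positivity)

section Collisions

variable {n k : ℕ} {p : ℝ}

lemma hprob_hstar_eq_and_card_eq_le (hk : 2 ≤ k) (hp0 : 0 ≤ p) (hp1 : p ≤ 1)
    {u v : Fin n} (huv : u ≠ v) (r : ℕ) :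
    hprob n k p (fun E => hstar E u = hstar E v ∧ #(hstar E u) = r)
      ≤ ((n - 2).choose (k - 2) * p) ^ r * Real.exp (2 * ((n - 2).choose (k - 2) * p)) *
          Real.exp (-(2 * ((n - 1).choose (k - 1) * p))) := by
  have hcount :=
    card_filter_mem_or_mem_add_card_filter_mem_and_mem (n := n) (by omega : 1 ≤ k) u v
  have hBT : #{e ∈ kSets n k | u ∈ e ∧ v ∈ e} ≤ #{e ∈ kSets n k | u ∈ e ∨ v ∈ e} :=
    card_le_card (monotone_filter_right _ fun _ _ h => Or.inl h.1)
  rw [hprob_hstar_eq_and_card_eq]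
  refine (choose_mul_pow_mul_one_sub_pow_le hp0 hp1 hBT r).trans_eq ?_
  rw [card_filter_mem_and_mem_kSets hk huv] at hcount ⊢
  rw [mul_assoc, ← Real.exp_add]
  congr 2
  have ht : (#{e ∈ kSets n k | u ∈ e ∨ v ∈ e} : ℝ)
      = 2 * (n - 1).choose (k - 1) - (n - 2).choose (k - 2) := by
    rw [eq_sub_iff_add_eq]
    exact_mod_cast hcount
  rw [ht]
  ring

lemma hexp_Xr (r : ℕ) :
    hexp n k p (fun E => (Xr n r E : ℝ))
      = ∑ P ∈ univ.powersetCard 2, hprob n k p (fun E =>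
          (∀ u ∈ P, ∀ v ∈ P, hstar E u = hstar E v) ∧ ∀ u ∈ P, #(hstar E u) = r) := by
  simp only [Xr, natCast_card_filter, hexp_sum]
  exact sum_congr rfl fun P _ => (hprob_eq_hexp _).symm

lemma hexp_Xr_le (hk : 2 ≤ k) (hp0 : 0 ≤ p) (hp1 : p ≤ 1) (r : ℕ) :
    hexp n k p (fun E => (Xr n r E : ℝ))
      ≤ n ^ 2 * Real.exp (-(2 * ((n - 1).choose (k - 1) * p))) *
          (((n - 2).choose (k - 2) * p) ^ r * Real.exp (2 * ((n - 2).choose (k - 2) * p))) := by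
  set M := ((n - 2).choose (k - 2) * p) ^ r * Real.exp (2 * ((n - 2).choose (k - 2) * p)) *
    Real.exp (-(2 * ((n - 1).choose (k - 1) * p)))
  have hpair : ∀ P ∈ (univ : Finset (Fin n)).powersetCard 2, hprob n k p (fun E =>
      (∀ u ∈ P, ∀ v ∈ P, hstar E u = hstar E v) ∧ ∀ u ∈ P, #(hstar E u) = r) ≤ M := by
    intro P hP
    obtain ⟨u, v, huv, rfl⟩ := card_eq_two.1 (mem_powersetCard.1 hP).2
    refine (hprob_mono hp0 hp1 fun E hE => ?_).trans
      (hprob_hstar_eq_and_card_eq_le hk hp0 hp1 huv r)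
    exact ⟨hE.1 u (by simp) v (by simp), hE.2 u (by simp)⟩
  have hpairs : ((univ : Finset (Fin n)).powersetCard 2).card ≤ (n : ℝ) ^ 2 := by
    rw [card_powersetCard, card_univ, Fintype.card_fin]
    exact_mod_cast Nat.choose_le_pow n 2
  calc hexp n k p (fun E => (Xr n r E : ℝ))
      ≤ ((univ : Finset (Fin n)).powersetCard 2).card * M := by
        rw [hexp_Xr, ← nsmul_eq_mul]
        exact sum_le_card_nsmul _ _ _ hpair
    _ ≤ n ^ 2 * M := by gcongr
    _ = _ := by ring

end Collisions

open Topology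

lemma tendsto_log_add_div_natCast_sub_one (c : ℝ) :
    Tendsto (fun n : ℕ => (Real.log n + c) / (n - 1)) atTop (𝓝 0) := by
  have hlog := Real.tendsto_pow_log_div_mul_add_atTop 1 (-1) 1 one_ne_zero
  have hconst : Tendsto (fun x : ℝ => c / (x - 1)) atTop (𝓝 0) :=
    tendsto_const_nhds.div_atTop (tendsto_atTop_add_const_right _ (-1) tendsto_id)
  rw [← add_zero 0]
  refine ((hlog.add hconst).comp tendsto_natCast_atTop_atTop).congr fun n => ?_
  simp only [Function.comp_apply, pow_one, one_mul, ← sub_eq_add_neg, add_div]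

lemma tendsto_choose_sub_two_mul {k : ℕ} (hk : 2 ≤ k) {c : ℝ} {p : ℕ → ℝ}
    (hlam : ∀ᶠ n in atTop, ((n - 1).choose (k - 1) : ℝ) * p n = Real.log n + c) :
    Tendsto (fun n => ((n - 2).choose (k - 2) : ℝ) * p n) atTop (𝓝 0) := by
  have hlim := (tendsto_log_add_div_natCast_sub_one c).const_mul ((k : ℝ) - 1)
  rw [mul_zero] at hlim
  refine hlim.congr' ?_
  filter_upwards [hlam, eventually_ge_atTop 2] with n hn hn2
  have hpascal : ((n : ℝ) - 1) * (n - 2).choose (k - 2) = (n - 1).choose (k - 1) * (k - 1) := by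
    have h := Nat.add_one_mul_choose_eq (n - 2) (k - 2)
    rw [show n - 2 + 1 = n - 1 by omega, show k - 2 + 1 = k - 1 by omega] at h
    have h' := congrArg (Nat.cast (R := ℝ)) h
    push_cast [Nat.cast_sub (by omega : 1 ≤ n), Nat.cast_sub (by omega : 1 ≤ k)] at h'
    exact h'
  have hn1 : (n : ℝ) - 1 ≠ 0 := by
    have : (2 : ℝ) ≤ n := by exact_mod_cast hn2
    linarith
  rw [← hn, mul_div_assoc', div_eq_iff hn1]
  linear_combination (-p n) * hpascal

lemma sq_mul_exp_neg_two_mul_log_add {x : ℝ} (hx : 0 < x) (c : ℝ) :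
    x ^ 2 * Real.exp (-(2 * (Real.log x + c))) = Real.exp (-(2 * c)) := by
  rw [← Real.exp_log hx, ← Real.exp_nat_mul, ← Real.exp_add, Real.log_exp]
  ring_nf

/-- In `H(n,k,p_n)` with expected degree `λ_n = C(n-1,k-1) p_n = log n + c`, for every
fixed `r ≥ 1` the expected number of star-collisions of support size `r` tends to `0`,
and in particular `P(X_r ≥ 1) → 0`. -/
theorem stmt11 (k : ℕ) (hk : 2 ≤ k) (c : ℝ) (p : ℕ → ℝ)
    (hp : ∀ᶠ n in atTop, 0 ≤ p n ∧ p n ≤ 1)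
    (hlam : ∀ᶠ n in atTop, ((n - 1).choose (k - 1) : ℝ) * p n = Real.log n + c)
    (r : ℕ) (hr : 1 ≤ r) :
    Tendsto (fun n => hexp n k (p n) (fun E => (Xr n r E : ℝ))) atTop (nhds 0)
      ∧ Tendsto (fun n => hprob n k (p n) (fun E => 1 ≤ Xr n r E)) atTop (nhds 0) := by
  set y := fun n => ((n - 2).choose (k - 2) : ℝ) * p n
  have hy : Tendsto y atTop (𝓝 0) := tendsto_choose_sub_two_mul hk hlam
  have hbound : Tendsto (fun n => Real.exp (-(2 * c)) * (y n ^ r * Real.exp (2 * y n)))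
      atTop (𝓝 0) := by
    have := tendsto_const_nhds (x := Real.exp (-(2 * c))).mul
      ((hy.pow r).mul ((hy.const_mul 2).rexp))
    simpa [zero_pow (by omega : r ≠ 0)] using this
  have hexp_tendsto :
      Tendsto (fun n => hexp n k (p n) (fun E => (Xr n r E : ℝ))) atTop (𝓝 0) := by
    refine squeeze_zero' ?_ ?_ hbound
    · filter_upwards [hp] with n hpn using hexp_nonneg hpn.1 hpn.2 fun E => Nat.cast_nonneg _
    · filter_upwards [hp, hlam, eventually_gt_atTop 0] with n hpn hn hn0
      refine (hexp_Xr_le hk hpn.1 hpn.2 r).trans_eq ?_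
      rw [hn, sq_mul_exp_neg_two_mul_log_add (by exact_mod_cast hn0)]
  refine ⟨hexp_tendsto, squeeze_zero' ?_ ?_ hexp_tendsto⟩
  · filter_upwards [hp] with n hpn using hprob_nonneg hpn.1 hpn.2 _
  · filter_upwards [hp] with n hpn using hprob_one_le_le_hexp hpn.1 hpn.2 _
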